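/- arXiv:2503.08828 — 9 statements merged into one kernel-verified Lean document; each statement's English description precedes it below -/
import Mathlib

section
/- Let f : 2^V → ℝ be a supermodular function on a finite set V and let X ⊆ V. Then the sum over u ∈ X of f(V − u) is at most (|X| − 1)·f(V) + f(V − X). -/
open Finset

theorem stmt_3 {V : Type*} [Fintype V] [DecidableEq V] (f : Finset V → ℝ)
    (hsup : ∀ A B : Finset V, f A + f B ≤ f (A ∩ B) + f (A ∪ B))
    (X : Finset V) :
    ∑ u ∈ X, f (univ.erase u) ≤ ((X.card : ℝ) - 1) * f univ + f (univ \ X) := by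
  induction X using Finset.induction_on with
  | empty => simp
  | insert a s ha ih =>
    rw [Finset.sum_insert ha]
    have key := hsup (univ.erase a) (univ \ s)
    have h1 : (univ.erase a) ∩ (univ \ s) = univ \ insert a s := by
      ext x; simp only [Finset.mem_inter, Finset.mem_erase, Finset.mem_sdiff, Finset.mem_univ,
        Finset.mem_insert, true_and, and_true]; tauto
    have h2 : (univ.erase a) ∪ (univ \ s) = (univ : Finset V) := by
      ext x
      simp only [Finset.mem_union, Finset.mem_erase, Finset.mem_sdiff, Finset.mem_univ,
        true_and, iff_true]
      by_cases hx : x = a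
      · right; subst hx; exact ha
      · left; exact ⟨hx, trivial⟩
    rw [h1, h2] at key
    have hcard : ((insert a s).card : ℝ) = s.card + 1 := by
      rw [Finset.card_insert_of_notMem ha]; push_cast; ring
    rw [hcard]
    linarith
end

section
/- Let f : 2^V → ℝ be a supermodular function on a finite set V, let ρ be a real number, and define g(X) := max over Z ⊆ X of (f(Z) − ρ|Z|), and h(X) := g(V) − g(V − X). Then h is submodular. -/
open Finset

theorem stmt_6 {V : Type*} [Fintype V] [DecidableEq V] (f : Finset V → ℝ) (ρ : ℝ)
    (hsup : ∀ A B : Finset V, f A + f B ≤ f (A ∩ B) + f (A ∪ B))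
    (g : Finset V → ℝ)
    (hg : ∀ X : Finset V,
      g X = X.powerset.sup' ⟨∅, Finset.empty_mem_powerset X⟩ (fun Z => f Z - ρ * Z.card))
    (h : Finset V → ℝ)
    (hh : ∀ X : Finset V, h X = g univ - g (univ \ X)) :
    ∀ A B : Finset V, h (A ∩ B) + h (A ∪ B) ≤ h A + h B := by
  have gsup : ∀ X Y : Finset V, g X + g Y ≤ g (X ∩ Y) + g (X ∪ Y) := by
    intro X Y
    obtain ⟨Z₁, hZ₁m, hZ₁⟩ := Finset.exists_mem_eq_sup' ⟨∅, Finset.empty_mem_powerset X⟩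
      (fun Z => f Z - ρ * Z.card)
    obtain ⟨Z₂, hZ₂m, hZ₂⟩ := Finset.exists_mem_eq_sup' ⟨∅, Finset.empty_mem_powerset Y⟩
      (fun Z => f Z - ρ * Z.card)
    rw [Finset.mem_powerset] at hZ₁m hZ₂m
    have hgX : g X = f Z₁ - ρ * Z₁.card := by rw [hg X, hZ₁]
    have hgY : g Y = f Z₂ - ρ * Z₂.card := by rw [hg Y, hZ₂]
    have h1 : f (Z₁ ∩ Z₂) - ρ * (Z₁ ∩ Z₂).card ≤ g (X ∩ Y) := by
      rw [hg (X ∩ Y)]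
      exact Finset.le_sup' (fun Z => f Z - ρ * Z.card)
        (Finset.mem_powerset.mpr (Finset.inter_subset_inter hZ₁m hZ₂m))
    have h2 : f (Z₁ ∪ Z₂) - ρ * (Z₁ ∪ Z₂).card ≤ g (X ∪ Y) := by
      rw [hg (X ∪ Y)]
      exact Finset.le_sup' (fun Z => f Z - ρ * Z.card)
        (Finset.mem_powerset.mpr (Finset.union_subset_union hZ₁m hZ₂m))
    have hcard : ((Z₁ ∩ Z₂).card : ℝ) + (Z₁ ∪ Z₂).card = (Z₁.card : ℝ) + Z₂.card := by
      have := Finset.card_inter_add_card_union Z₁ Z₂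
      exact_mod_cast this
    have hc2 : ρ * ((Z₁ ∩ Z₂).card : ℝ) + ρ * (Z₁ ∪ Z₂).card
        = ρ * Z₁.card + ρ * Z₂.card := by
      rw [← mul_add, ← mul_add, hcard]
    have := hsup Z₁ Z₂
    rw [hgX, hgY]
    linarith
  intro A B
  have e1 : (univ \ A) ∩ (univ \ B) = univ \ (A ∪ B) := by
    ext x; simp [not_or]
  have e2 : (univ \ A) ∪ (univ \ B) = univ \ (A ∩ B) := by
    ext x; simp; tauto
  have key := gsup (univ \ A) (univ \ B)
  rw [e1, e2] at key
  rw [hh A, hh B, hh (A ∩ B), hh (A ∪ B)]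
  linarith
end

section
/- Let f : 2^V → ℝ be a normalized supermodular function, ρ ∈ ℝ, g(X) := max_{Z ⊆ X}(f(Z) − ρ|Z|), and h(X) := g(V) − g(V − X). Then for every v ∈ V, h({v}) ≤ max{0, f(V) − f(V − v) − ρ}. -/
open Finset

theorem stmt_9 {V : Type*} [Fintype V] [DecidableEq V] (f : Finset V → ℝ) (ρ : ℝ)
    (hsup : ∀ A B : Finset V, f A + f B ≤ f (A ∩ B) + f (A ∪ B))
    (hnorm : f ∅ = 0)
    (g : Finset V → ℝ)
    (hg : ∀ X : Finset V,
      g X = X.powerset.sup' ⟨∅, Finset.empty_mem_powerset X⟩ (fun Z => f Z - ρ * Z.card))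
    (h : Finset V → ℝ)
    (hh : ∀ X : Finset V, h X = g univ - g (univ \ X)) :
    ∀ v : V, h {v} ≤ max 0 (f univ - f (univ.erase v) - ρ) := by
  intro v
  rw [hh]
  have hsd : (univ : Finset V) \ {v} = univ.erase v := by
    ext x; simp [mem_erase, eq_comm]
  rw [hsd]
  -- pick a maximizer Z of g univ
  obtain ⟨Z, hZmem, hZeq⟩ := Finset.exists_mem_eq_sup' (⟨∅, Finset.empty_mem_powerset univ⟩ :
      ((univ : Finset V).powerset).Nonempty) (fun Z => f Z - ρ * Z.card)
  rw [hg, hZeq]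
  have hle : ∀ W ∈ (univ.erase v).powerset,
      f W - ρ * W.card ≤ g (univ.erase v) := by
    intro W hW
    rw [hg]
    exact Finset.le_sup' (fun Z => f Z - ρ * (Z.card : ℝ)) hW
  by_cases hv : v ∈ Z
  · -- use Z.erase v
    have hmem : Z.erase v ∈ (univ.erase v).powerset := by
      simp only [Finset.mem_powerset]
      exact Finset.erase_subset_erase v (Finset.subset_univ Z)
    have h1 := hle _ hmem
    have hcard : ((Z.erase v).card : ℝ) = (Z.card : ℝ) - 1 := by
      rw [Finset.card_erase_of_mem hv]
      have : 1 ≤ Z.card := Finset.card_pos.mpr ⟨v, hv⟩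
      push_cast [Nat.cast_sub this]
      ring
    have hsup' := hsup Z (univ.erase v)
    have hint : Z ∩ univ.erase v = Z.erase v := by
      ext x; simp [mem_erase, and_comm]
    have huni : Z ∪ univ.erase v = univ := by
      apply Finset.eq_univ_of_forall
      intro x
      by_cases hx : x = v
      · subst hx; simp [hv]
      · simp [hx]
    rw [hint, huni] at hsup'
    have : f Z - f (Z.erase v) ≤ f univ - f (univ.erase v) := by linarith
    have key : f Z - ρ * Z.card - g (univ.erase v) ≤
        f univ - f (univ.erase v) - ρ := by
      have h2 := h1
      rw [hcard] at h2
      linarith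
    calc f Z - ρ * Z.card - g (univ.erase v) ≤ f univ - f (univ.erase v) - ρ := key
      _ ≤ max 0 (f univ - f (univ.erase v) - ρ) := le_max_right _ _
  · have hmem : Z ∈ (univ.erase v).powerset := by
      simp only [Finset.mem_powerset]
      intro x hx
      simp [Finset.mem_erase]
      rintro rfl; exact hv hx
    have h1 := hle _ hmem
    have : f Z - ρ * Z.card - g (univ.erase v) ≤ 0 := by linarith
    exact this.trans (le_max_left _ _)
end

section
/- A finite graph G has maximum subgraph density at most a real ρ ≥ 0 if and only if there exists a fractional orientation z (assigning nonnegative weights z_{e,u}, z_{e,v} to each edge e = {u,v} with z_{e,u} + z_{e,v} = 1) such that the total fractional in-degree at every vertex is at most ρ. -/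
open Finset

/-- A finite (multi)graph, possibly with self-loops, given by a finite type of
edges together with the two (possibly equal) endpoints of each edge. -/
structure MultiGraph (V : Type*) where
  E : Type*
  fintypeE : Fintype E
  ends : E → V × V

attribute [instance] MultiGraph.fintypeE

/-- Number of edges with both endpoints in `S`. -/
noncomputable def MultiGraph.edgesIn {V : Type*} [DecidableEq V] (G : MultiGraph V)
    (S : Finset V) : ℕ :=
  (univ.filter (fun e : G.E => (G.ends e).1 ∈ S ∧ (G.ends e).2 ∈ S)).card

/-- Fractional in-degree of `u` under the fractional orientation assigning weight
`z e` of edge `e` to its first endpoint and `1 - z e` to its second endpoint. -/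
noncomputable def MultiGraph.fracInDeg {V : Type*} [DecidableEq V] (G : MultiGraph V)
    (z : G.E → ℝ) (u : V) : ℝ :=
  ∑ e : G.E, ((if (G.ends e).1 = u then z e else 0) +
    (if (G.ends e).2 = u then 1 - z e else 0))

section Aux

set_option linter.unusedSectionVars false

variable {V : Type*} [Fintype V] [DecidableEq V] (G : MultiGraph V)

lemma aux_sum_fracInDeg (z : G.E → ℝ) (S : Finset V) :
    ∑ u ∈ S, G.fracInDeg z u =
      ∑ e : G.E, ((if (G.ends e).1 ∈ S then z e else 0) +
        (if (G.ends e).2 ∈ S then 1 - z e else 0)) := by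
  unfold MultiGraph.fracInDeg
  rw [Finset.sum_comm]
  refine Finset.sum_congr rfl fun e _ => ?_
  rw [Finset.sum_add_distrib, Finset.sum_ite_eq, Finset.sum_ite_eq]

lemma aux_edgesIn_cast (S : Finset V) :
    (G.edgesIn S : ℝ) =
      ∑ e : G.E, (if (G.ends e).1 ∈ S ∧ (G.ends e).2 ∈ S then (1 : ℝ) else 0) := by
  unfold MultiGraph.edgesIn
  rw [Finset.sum_boole]

lemma aux_fracInDeg_update [DecidableEq G.E] (z : G.E → ℝ) (e : G.E) (t : ℝ) (u : V) :
    G.fracInDeg (Function.update z e t) u =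
      G.fracInDeg z u + ((if (G.ends e).1 = u then t - z e else 0) +
        (if (G.ends e).2 = u then z e - t else 0)) := by
  set g : G.E → ℝ := fun e' => (if (G.ends e').1 = u then z e' else 0) +
    (if (G.ends e').2 = u then 1 - z e' else 0) with hg
  have h1 : G.fracInDeg (Function.update z e t) u
      = ∑ e' : G.E, Function.update g e
          ((if (G.ends e).1 = u then t else 0) +
            (if (G.ends e).2 = u then 1 - t else 0)) e' := by
    unfold MultiGraph.fracInDeg
    refine Finset.sum_congr rfl fun e' _ => ?_
    by_cases h : e' = e
    · subst h; simp [hg]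
    · simp [Function.update_of_ne h, hg]
  have h2 : G.fracInDeg z u = ∑ e' : G.E, g e' := rfl
  rw [h1, h2, Finset.sum_update_of_mem (Finset.mem_univ e)]
  rw [show (univ : Finset G.E) \ {e} = univ.erase e from Finset.sdiff_singleton_eq_erase e univ,
    ← Finset.add_sum_erase _ g (Finset.mem_univ e)]
  have hge : g e = (if (G.ends e).1 = u then z e else 0) +
      (if (G.ends e).2 = u then 1 - z e else 0) := rfl
  rw [hge]
  split_ifs <;> ring

/-- Key local optimality inequality at a minimizer of the energy. -/
lemma aux_key [DecidableEq G.E] (z : G.E → ℝ)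
    (hz : z ∈ (Set.univ.pi fun _ : G.E => Set.Icc (0:ℝ) 1))
    (hmin : IsMinOn (fun w : G.E → ℝ => ∑ u : V, (G.fracInDeg w u) ^ 2)
      (Set.univ.pi fun _ => Set.Icc (0:ℝ) 1) z)
    (e : G.E) (hab : (G.ends e).1 ≠ (G.ends e).2) (t : ℝ) (ht0 : 0 ≤ t) (ht1 : t ≤ 1) :
    0 ≤ (t - z e) * (G.fracInDeg z (G.ends e).1 - G.fracInDeg z (G.ends e).2 + (t - z e)) := by
  set f := G.fracInDeg z with hf
  set a := (G.ends e).1 with hA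
  set b := (G.ends e).2 with hB
  have hmem : Function.update z e t ∈ (Set.univ.pi fun _ : G.E => Set.Icc (0:ℝ) 1) := by
    intro i _
    by_cases h : i = e
    · subst h; simp [ht0, ht1]
    · rw [Function.update_of_ne h]; exact hz i (Set.mem_univ i)
  have hle : ∑ u : V, (f u) ^ 2 ≤ ∑ u : V, (G.fracInDeg (Function.update z e t) u) ^ 2 :=
    isMinOn_iff.mp hmin _ hmem
  have hexp : ∀ u : V, (G.fracInDeg (Function.update z e t) u) ^ 2
      = (f u) ^ 2 + ((if a = u then 2 * (f u) * (t - z e) + (t - z e) ^ 2 else 0)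
        + (if b = u then -(2 * (f u) * (t - z e)) + (t - z e) ^ 2 else 0)) := by
    intro u
    rw [aux_fracInDeg_update]
    rw [← hf, ← hA, ← hB]
    split_ifs with h1 h2 h2
    · exact absurd (h1.trans h2.symm) hab
    · ring
    · ring
    · ring
  have hsum : ∑ u : V, (G.fracInDeg (Function.update z e t) u) ^ 2
      = ∑ u : V, (f u) ^ 2 + (2 * (f a) * (t - z e) + (t - z e) ^ 2)
        + (-(2 * (f b) * (t - z e)) + (t - z e) ^ 2) := by
    rw [Finset.sum_congr rfl fun u _ => hexp u]
    rw [Finset.sum_add_distrib, Finset.sum_add_distrib, Finset.sum_ite_eq, Finset.sum_ite_eq]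
    simp [add_assoc]
  rw [hsum] at hle
  nlinarith [hle]

/-- Along a "shiftable" arc, the in-degree is monotone at a minimizer. -/
lemma aux_mono [DecidableEq G.E] (z : G.E → ℝ)
    (hz : z ∈ (Set.univ.pi fun _ : G.E => Set.Icc (0:ℝ) 1))
    (hmin : IsMinOn (fun w : G.E → ℝ => ∑ u : V, (G.fracInDeg w u) ^ 2)
      (Set.univ.pi fun _ => Set.Icc (0:ℝ) 1) z)
    (p q : V)
    (hr : (∃ e, G.ends e = (p, q) ∧ 0 < z e) ∨ (∃ e, G.ends e = (q, p) ∧ z e < 1)) :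
    G.fracInDeg z p ≤ G.fracInDeg z q := by
  by_contra hcon
  push_neg at hcon
  rcases hr with ⟨e, hends, hpos⟩ | ⟨e, hends, hlt⟩
  · have hab : (G.ends e).1 ≠ (G.ends e).2 := by
      rw [hends]; intro h
      exact absurd hcon (by rw [show p = q from h]; exact lt_irrefl _)
    have hz1 : z e ≤ 1 := (hz e (Set.mem_univ e)).2
    set d := min (z e) ((G.fracInDeg z p - G.fracInDeg z q) / 2) with hd
    have hd0 : 0 < d := lt_min hpos (by linarith)
    have hdz : d ≤ z e := min_le_left _ _
    have hdh : d ≤ (G.fracInDeg z p - G.fracInDeg z q) / 2 := min_le_right _ _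
    have hkey := aux_key G z hz hmin e hab (z e - d) (by linarith) (by linarith)
    rw [hends] at hkey
    simp only at hkey
    nlinarith [hkey]
  · have hab : (G.ends e).1 ≠ (G.ends e).2 := by
      rw [hends]; intro h
      exact absurd hcon (by rw [show q = p from h]; exact lt_irrefl _)
    have hz0 : 0 ≤ z e := (hz e (Set.mem_univ e)).1
    set d := min (1 - z e) ((G.fracInDeg z p - G.fracInDeg z q) / 2) with hd
    have hd0 : 0 < d := lt_min (by linarith) (by linarith)
    have hdz : d ≤ 1 - z e := min_le_left _ _
    have hdh : d ≤ (G.fracInDeg z p - G.fracInDeg z q) / 2 := min_le_right _ _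
    have hkey := aux_key G z hz hmin e hab (z e + d) (by linarith) (by linarith)
    rw [hends] at hkey
    simp only at hkey
    nlinarith [hkey]

end Aux

theorem stmt_11 {V : Type*} [Fintype V] [DecidableEq V] (G : MultiGraph V) (ρ : ℝ)
    (hρ : 0 ≤ ρ) :
    (∀ S : Finset V, S.Nonempty → (G.edgesIn S : ℝ) ≤ ρ * S.card) ↔
    (∃ z : G.E → ℝ, (∀ e, 0 ≤ z e ∧ z e ≤ 1) ∧ ∀ u : V, G.fracInDeg z u ≤ ρ) := by
  classical
  constructor
  · intro hdens
    -- find a minimizer of the energy on the box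
    have hbox_cpt : IsCompact (Set.univ.pi fun _ : G.E => Set.Icc (0:ℝ) 1) :=
      isCompact_univ_pi fun _ => isCompact_Icc
    have hbox_ne : (Set.univ.pi fun _ : G.E => Set.Icc (0:ℝ) 1).Nonempty :=
      ⟨fun _ => 0, fun i _ => ⟨le_refl 0, zero_le_one⟩⟩
    have hcont : Continuous fun w : G.E → ℝ => ∑ u : V, (G.fracInDeg w u) ^ 2 := by
      apply continuous_finset_sum
      intro u _
      apply Continuous.pow
      unfold MultiGraph.fracInDeg
      apply continuous_finset_sum
      intro e _
      apply Continuous.add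
      · split_ifs
        · exact continuous_apply e
        · exact continuous_const
      · split_ifs
        · exact continuous_const.sub (continuous_apply e)
        · exact continuous_const
    obtain ⟨z, hzbox, hmin⟩ := hbox_cpt.exists_isMinOn hbox_ne hcont.continuousOn
    have hz01 : ∀ e, 0 ≤ z e ∧ z e ≤ 1 := fun e => hzbox e (Set.mem_univ e)
    refine ⟨z, hz01, ?_⟩
    intro u
    set f := G.fracInDeg z with hf
    -- pick a vertex of maximum fractional in-degree
    obtain ⟨u₀, -, hu₀⟩ := Finset.exists_max_image (univ : Finset V) f ⟨u, mem_univ u⟩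
    set r : V → V → Prop := fun p q =>
      (∃ e, G.ends e = (p, q) ∧ 0 < z e) ∨ (∃ e, G.ends e = (q, p) ∧ z e < 1) with hrdef
    have hmono : ∀ p q, r p q → f p ≤ f q := fun p q h => aux_mono G z hzbox hmin p q h
    set S : Finset V := univ.filter (fun v => Relation.ReflTransGen r u₀ v) with hSdef
    have hu₀S : u₀ ∈ S := mem_filter.mpr ⟨mem_univ _, Relation.ReflTransGen.refl⟩
    have hchain : ∀ v, Relation.ReflTransGen r u₀ v → f u₀ ≤ f v := by
      intro v hre
      induction hre with
      | refl => exact le_refl _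
      | tail h hr ih => exact le_trans ih (hmono _ _ hr)
    have hSval : ∀ v ∈ S, f v = f u₀ := by
      intro v hv
      have h1 : f v ≤ f u₀ := hu₀ v (mem_univ v)
      have h2 : f u₀ ≤ f v := hchain v (mem_filter.mp hv).2
      linarith
    have hclosed : ∀ p q, p ∈ S → r p q → q ∈ S := fun p q hp hr =>
      mem_filter.mpr ⟨mem_univ q, ((mem_filter.mp hp).2).tail hr⟩
    -- per-edge contribution bound
    have hedge : ∀ e : G.E,
        ((if (G.ends e).1 ∈ S then z e else 0) + (if (G.ends e).2 ∈ S then 1 - z e else 0))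
          ≤ (if (G.ends e).1 ∈ S ∧ (G.ends e).2 ∈ S then (1:ℝ) else 0) := by
      intro e
      obtain ⟨hz0, hz1⟩ := hz01 e
      by_cases ha : (G.ends e).1 ∈ S <;> by_cases hb : (G.ends e).2 ∈ S
      · simp only [ha, hb, if_true, and_self]
        linarith
      · have hz0' : ¬ (0 < z e) := by
          intro hpos
          exact hb (hclosed _ _ ha (Or.inl ⟨e, by rw [Prod.mk.eta], hpos⟩))
        simp only [ha, hb, if_true, if_false, and_false]
        push_neg at hz0'
        linarith
      · have hz1' : ¬ (z e < 1) := by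
          intro hlt
          exact ha (hclosed _ _ hb (Or.inr ⟨e, by rw [Prod.mk.eta], hlt⟩))
        simp only [ha, hb, if_true, if_false, false_and]
        push_neg at hz1'
        linarith
      · simp only [ha, hb, if_false, false_and]
        linarith
    -- summing up
    have hsum1 : ∑ v ∈ S, f v = f u₀ * S.card := by
      rw [Finset.sum_congr rfl hSval, Finset.sum_const, nsmul_eq_mul]
      ring
    have hsum2 : ∑ v ∈ S, f v ≤ (G.edgesIn S : ℝ) := by
      rw [hf, aux_sum_fracInDeg, aux_edgesIn_cast]
      exact Finset.sum_le_sum fun e _ => hedge e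
    have hSne : S.Nonempty := ⟨u₀, hu₀S⟩
    have hcard : (1:ℝ) ≤ S.card := by
      have := Finset.card_pos.mpr hSne
      exact_mod_cast this
    have hdS := hdens S hSne
    have hfinal : f u₀ ≤ ρ := by nlinarith [hsum1, hsum2, hdS, hcard]
    exact le_trans (hu₀ u (mem_univ u)) hfinal
  · rintro ⟨z, hz01, hdeg⟩ S hS
    have h1 : (G.edgesIn S : ℝ) ≤ ∑ u ∈ S, G.fracInDeg z u := by
      rw [aux_sum_fracInDeg, aux_edgesIn_cast]
      refine Finset.sum_le_sum fun e _ => ?_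
      obtain ⟨hz0, hz1⟩ := hz01 e
      by_cases ha : (G.ends e).1 ∈ S <;> by_cases hb : (G.ends e).2 ∈ S <;>
        simp only [ha, hb, if_true, if_false, and_self, and_false, false_and] <;> linarith
    have h2 : ∑ u ∈ S, G.fracInDeg z u ≤ ρ * S.card := by
      calc ∑ u ∈ S, G.fracInDeg z u ≤ ∑ _u ∈ S, ρ := Finset.sum_le_sum fun u _ => hdeg u
        _ = ρ * S.card := by rw [Finset.sum_const, nsmul_eq_mul]; ring
    linarith
end

section
/- For an integer ρ ≥ 0, a finite graph G has maximum subgraph density at most ρ if and only if there exists an orientation of the edges of G such that every vertex has in-degree at most ρ. -/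
open Finset

/-- In-degree of `u` under the orientation assigning head `head e` to each edge `e`. -/
noncomputable def MultiGraph.inDeg {V : Type*} [DecidableEq V] (G : MultiGraph V)
    (head : G.E → V) (u : V) : ℕ :=
  (univ.filter (fun e : G.E => head e = u)).card

theorem stmt_12 {V : Type*} [Fintype V] [DecidableEq V] (G : MultiGraph V) (ρ : ℕ) :
    (∀ S : Finset V, S.Nonempty → (G.edgesIn S : ℝ) ≤ (ρ : ℝ) * S.card) ↔
    (∃ head : G.E → V,
      (∀ e, head e = (G.ends e).1 ∨ head e = (G.ends e).2) ∧
      ∀ u : V, G.inDeg head u ≤ ρ) := by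
  classical
  constructor
  · intro h
    -- Hall's theorem on edges vs (vertex, copy) pairs
    set t : G.E → Finset (V × Fin ρ) :=
      fun e => ({(G.ends e).1, (G.ends e).2} : Finset V) ×ˢ (univ : Finset (Fin ρ)) with ht
    have hall : ∀ s : Finset G.E, s.card ≤ (s.biUnion t).card := by
      intro s
      rcases s.eq_empty_or_nonempty with rfl | hs
      · simp
      · set S : Finset V := s.biUnion (fun e => {(G.ends e).1, (G.ends e).2}) with hS
        have hSne : S.Nonempty := by
          obtain ⟨e, he⟩ := hs
          exact ⟨(G.ends e).1, Finset.mem_biUnion.2 ⟨e, he, by simp⟩⟩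
        have hsub : s ⊆ univ.filter (fun e : G.E => (G.ends e).1 ∈ S ∧ (G.ends e).2 ∈ S) := by
          intro e he
          simp only [Finset.mem_filter, Finset.mem_univ, true_and]
          constructor <;> exact Finset.mem_biUnion.2 ⟨e, he, by simp⟩
        have h1 : s.card ≤ G.edgesIn S := Finset.card_le_card hsub
        have h2 : (G.edgesIn S : ℝ) ≤ (ρ : ℝ) * S.card := h S hSne
        have h2' : G.edgesIn S ≤ ρ * S.card := by exact_mod_cast h2
        have hbi : s.biUnion t = S ×ˢ (univ : Finset (Fin ρ)) := by
          ext ⟨v, i⟩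
          simp [ht, hS, Finset.mem_biUnion, and_comm]
        rw [hbi, Finset.card_product, Finset.card_univ, Fintype.card_fin]
        calc s.card ≤ ρ * S.card := h1.trans h2'
          _ = S.card * ρ := Nat.mul_comm _ _
    obtain ⟨f, hinj, hmem⟩ := (Finset.all_card_le_biUnion_card_iff_existsInjective' t).1 hall
    refine ⟨fun e => (f e).1, ?_, ?_⟩
    · intro e
      have := hmem e
      simp only [ht, Finset.mem_product, Finset.mem_insert, Finset.mem_singleton] at this
      exact this.1
    · intro u
      rw [MultiGraph.inDeg]
      have : (univ.filter (fun e : G.E => (f e).1 = u)).card ≤ (univ : Finset (Fin ρ)).card := by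
        apply Finset.card_le_card_of_injOn (fun e => (f e).2) (fun _ _ => Finset.mem_univ _)
        intro a ha b hb hab
        simp only [Finset.mem_coe, Finset.mem_filter] at ha hb
        apply hinj
        exact Prod.ext (ha.2.trans hb.2.symm) hab
      simpa using this
  · rintro ⟨head, hhead, hdeg⟩ S hS
    have key : G.edgesIn S ≤ ρ * S.card := by
      rw [MultiGraph.edgesIn]
      have hsub : univ.filter (fun e : G.E => (G.ends e).1 ∈ S ∧ (G.ends e).2 ∈ S) ⊆
          S.biUnion (fun u => univ.filter (fun e : G.E => head e = u)) := by
        intro e he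
        simp only [Finset.mem_filter, Finset.mem_univ, true_and] at he
        apply Finset.mem_biUnion.2
        refine ⟨head e, ?_, by simp⟩
        rcases hhead e with h1 | h1 <;> rw [h1]
        exacts [he.1, he.2]
      calc (univ.filter (fun e : G.E => (G.ends e).1 ∈ S ∧ (G.ends e).2 ∈ S)).card
          ≤ (S.biUnion (fun u => univ.filter (fun e : G.E => head e = u))).card :=
            Finset.card_le_card hsub
        _ ≤ ∑ u ∈ S, (univ.filter (fun e : G.E => head e = u)).card := Finset.card_biUnion_le
        _ ≤ ∑ _u ∈ S, ρ := Finset.sum_le_sum (fun u _ => hdeg u)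
        _ = ρ * S.card := by rw [Finset.sum_const, smul_eq_mul, Nat.mul_comm]
    calc (G.edgesIn S : ℝ) ≤ ((ρ * S.card : ℕ) : ℝ) := by exact_mod_cast key
      _ = (ρ : ℝ) * S.card := by push_cast; ring
end

section
/- A finite graph G is a pseudoforest (every connected component contains at most one cycle) if and only if its maximum subgraph density is at most 1, i.e., |E(S)| ≤ |S| for every subset S of vertices. -/
open Finset SimpleGraph Walk

section PFaux

variable {V : Type*} [DecidableEq V]

/-- The restriction of `G` to edges within `S`, as a graph on the same vertex type. -/
def PFwithin (G : SimpleGraph V) (S : Finset V) : SimpleGraph V where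
  Adj x y := G.Adj x y ∧ x ∈ S ∧ y ∈ S
  symm := ⟨fun _ _ ⟨h, hx, hy⟩ => ⟨h.symm, hy, hx⟩⟩
  loopless := ⟨fun x ⟨h, _⟩ => G.loopless.irrefl x h⟩

instance (G : SimpleGraph V) [DecidableRel G.Adj] (S : Finset V) :
    DecidableRel (PFwithin G S).Adj := fun x y => by
  unfold PFwithin; infer_instance

lemma PFwithin_le (G : SimpleGraph V) (S : Finset V) : PFwithin G S ≤ G :=
  fun _ _ h => h.1

lemma PFwithin_edgeFinset [Fintype V] (G : SimpleGraph V) [DecidableRel G.Adj] (S : Finset V) :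
    (PFwithin G S).edgeFinset = G.edgeFinset.filter (fun e => ∀ x ∈ e, x ∈ S) := by
  ext e
  induction e with
  | _ a b =>
    rw [mem_edgeFinset, SimpleGraph.mem_edgeSet]
    simp [mem_edgeFinset, SimpleGraph.mem_edgeSet, PFwithin, Sym2.mem_iff]

instance PFinstDel (G : SimpleGraph V) [DecidableRel G.Adj] (e : Sym2 V) :
    DecidableRel (G.deleteEdges {e}).Adj := fun x y =>
  decidable_of_iff (G.Adj x y ∧ ¬ s(x,y) = e) (by simp)

lemma PF_edgeFinset_del [Fintype V] (H : SimpleGraph V) [DecidableRel H.Adj] (e : Sym2 V) :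
    (H.deleteEdges {e}).edgeFinset = H.edgeFinset.erase e := by
  ext e'
  simp only [mem_edgeFinset, edgeSet_deleteEdges, Set.mem_diff, Set.mem_singleton_iff,
    Finset.mem_erase]
  tauto

/-- Deleting an edge of a cycle preserves reachability. -/
lemma PF_del_reach {H : SimpleGraph V} {u : V} {c : H.Walk u u} (hc : c.IsCycle)
    {e : Sym2 V} (he : e ∈ c.edges) {x y : V} (hxy : H.Reachable x y) :
    (H.deleteEdges {e}).Reachable x y := by
  induction e with
  | _ a b =>
    have hab : H.Adj a b ∧ (H \ fromEdgeSet {s(a,b)}).Reachable a b :=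
      adj_and_reachable_delete_edges_iff_exists_cycle.mpr ⟨u, c, hc, he⟩
    have hab' : (H.deleteEdges {s(a,b)}).Reachable a b := hab.2
    obtain ⟨p⟩ := hxy
    induction p with
    | nil => exact Reachable.refl _
    | cons h q ih =>
      rename_i s t w
      refine Reachable.trans ?_ ih
      by_cases hse : s(s, t) = s(a, b)
      · rw [Sym2.eq_iff] at hse
        rcases hse with ⟨rfl, rfl⟩ | ⟨rfl, rfl⟩
        · exact hab'
        · exact hab'.symm
      · exact Adj.reachable (by simp [hse, h])

variable {H : SimpleGraph V} {r : V}

lemma PF_dist_support {w z : V} {p : H.Walk w r} (hl : p.length = H.dist w r)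
    (hz : z ∈ p.support) : H.dist z r ≤ H.dist w r := by
  have h2 : H.dist z r ≤ (p.dropUntil z hz).length := dist_le _
  have h3 : (p.takeUntil z hz).length + (p.dropUntil z hz).length = p.length := by
    rw [← length_append, p.take_spec hz]
  omega

lemma PF_dist_support_lt {w z : V} {p : H.Walk w r} (hl : p.length = H.dist w r)
    (hz : z ∈ p.support) (hne : z ≠ w) : H.dist z r < H.dist w r := by
  have h2 : H.dist z r ≤ (p.dropUntil z hz).length := dist_le _
  have h3 : (p.takeUntil z hz).length + (p.dropUntil z hz).length = p.length := by
    rw [← length_append, p.take_spec hz]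
  have h4 : (p.takeUntil z hz).length ≠ 0 := by
    intro h0
    exact hne ((nil_iff_length_eq.mpr h0).eq).symm
  omega

lemma PF_adj_dist_ne (hac : H.IsAcyclic) {x y : V} (hxy : H.Adj x y)
    (hx : H.Reachable x r) : H.dist x r ≠ H.dist y r := by
  have hy : H.Reachable y r := (hxy.symm.reachable).trans hx
  obtain ⟨px, hpx, hlx⟩ := hx.exists_path_of_dist
  obtain ⟨py, hpy, hly⟩ := hy.exists_path_of_dist
  intro heq
  have hxs : x ∉ py.support := by
    intro hm
    have := PF_dist_support_lt hly hm hxy.ne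
    omega
  have hq : (Walk.cons hxy py).IsPath := hpy.cons hxs
  have := hac.path_unique ⟨px, hpx⟩ ⟨Walk.cons hxy py, hq⟩
  have hlen := congrArg Walk.length (congrArg Subtype.val this)
  simp only [Walk.length_cons] at hlen
  omega

variable [Fintype V]

lemma PF_LB [DecidableRel H.Adj] {S : Finset V} (hr : r ∈ S)
    (hconn : ∀ x ∈ S, H.Reachable x r) :
    S.card ≤ H.edgeFinset.card + 1 := by
  classical
  choose p hpath hlen using fun (w : V) (h : w ∈ S) => (hconn w h).exists_path_of_dist
  have key : ∀ (w : V) (h : w ∈ S.erase r),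
      H.dist ((p w (mem_of_mem_erase h)).getVert 1) r < H.dist w r := by
    intro w h
    have hnn : ¬(p w (mem_of_mem_erase h)).Nil := not_nil_of_ne (ne_of_mem_erase h)
    have h2 : H.dist ((p w (mem_of_mem_erase h)).getVert 1) r
        ≤ (p w (mem_of_mem_erase h)).tail.length := dist_le _
    have h3 := length_tail_add_one hnn
    rw [hlen w (mem_of_mem_erase h)] at h3
    omega
  suffices h : (S.erase r).card ≤ H.edgeFinset.card by
    rw [card_erase_of_mem hr] at h; omega
  apply Finset.card_le_card_of_injOn
    (fun w => if h : w ∈ S.erase r then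
      ((p w (mem_of_mem_erase h)).firstDart (not_nil_of_ne (ne_of_mem_erase h))).edge
      else s(r,r))
  · intro w hw
    simp only [dif_pos (Finset.mem_coe.mp hw)]
    exact mem_edgeFinset.mpr (Dart.edge_mem _)
  · intro w hw w' hw' heq
    rw [Finset.mem_coe] at hw hw'
    simp only [dif_pos hw, dif_pos hw', edge_firstDart] at heq
    rw [Sym2.eq_iff] at heq
    rcases heq with ⟨h1, _⟩ | ⟨h1, h2⟩
    · exact h1
    · have k1 := key w hw
      have k2 := key w' hw'
      unfold Walk.snd at h1 h2
      rw [h2] at k1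
      rw [← h1] at k2
      omega

lemma PF_UB [DecidableRel H.Adj] (hac : H.IsAcyclic) {S : Finset V} (hr : r ∈ S)
    (hconn : ∀ x ∈ S, H.Reachable x r)
    (hedge : ∀ ⦃x y⦄, H.Adj x y → x ∈ S) :
    H.edgeFinset.card + 1 ≤ S.card := by
  classical
  choose p hpath hlen using fun (w : V) (h : w ∈ S) => (hconn w h).exists_path_of_dist
  set f : V → Sym2 V := fun w => if h : w ∈ S.erase r then
      ((p w (mem_of_mem_erase h)).firstDart (not_nil_of_ne (ne_of_mem_erase h))).edge
      else s(r,r) with hf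
  suffices h : H.edgeFinset.card ≤ (S.erase r).card by
    rw [card_erase_of_mem hr] at h
    have : 1 ≤ S.card := card_pos.mpr ⟨r, hr⟩
    omega
  apply Finset.card_le_card_of_surjOn f
  have aux : ∀ a b (hab : H.Adj a b), H.dist b r < H.dist a r →
      ∃ w ∈ S.erase r, f w = s(a, b) := by
    intro a b hab hlt
    have haS : a ∈ S := hedge hab
    have hbS : b ∈ S := hedge hab.symm
    have har : a ≠ r := by
      intro h; rw [h, dist_self] at hlt; omega
    have ha' : a ∈ S.erase r := mem_erase.mpr ⟨har, haS⟩
    have hans : a ∉ (p b hbS).support := by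
      intro hm
      have := PF_dist_support (hlen b hbS) hm
      omega
    have hq : (Walk.cons hab (p b hbS)).IsPath := (hpath b hbS).cons hans
    have huniq := hac.path_unique ⟨p a haS, hpath a haS⟩ ⟨Walk.cons hab (p b hbS), hq⟩
    have hval : p a haS = Walk.cons hab (p b hbS) := congrArg Subtype.val huniq
    refine ⟨a, ha', ?_⟩
    simp only [hf, dif_pos ha', edge_firstDart]
    rw [hval]
    simp [Walk.getVert_cons_succ]
  intro e he
  simp only [coe_sort_coe, Finset.mem_coe, mem_edgeFinset] at he
  induction e with
  | _ a b =>
    have hab : H.Adj a b := he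
    have hne := PF_adj_dist_ne hac hab (hconn a (hedge hab))
    rcases hne.lt_or_gt with h | h
    · obtain ⟨w, hw, hfw⟩ := aux b a hab.symm h
      exact ⟨w, hw, hfw.trans (Sym2.eq_swap)⟩
    · obtain ⟨w, hw, hfw⟩ := aux a b hab h
      exact ⟨w, hw, hfw⟩

/-- Two cycles with an edge of one missing from the other force `|S| + 1 ≤ m`
in a graph connected on `S`. -/
lemma PF_core_lb [DecidableRel H.Adj] {S : Finset V} (hr : r ∈ S)
    (hconn : ∀ x ∈ S, H.Reachable x r)
    {u v : V} {c : H.Walk u u} {d : H.Walk v v}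
    (hc : c.IsCycle) (hd : d.IsCycle) {e₁ : Sym2 V}
    (he1c : e₁ ∈ c.edges) (he1d : e₁ ∉ d.edges) :
    S.card + 1 ≤ H.edgeFinset.card := by
  classical
  set H₂ := H.deleteEdges {e₁} with hH2
  have hconn₂ : ∀ x ∈ S, H₂.Reachable x r := fun x hx => PF_del_reach hc he1c (hconn x hx)
  have hd2sub : ∀ e ∈ d.edges, e ∈ H₂.edgeSet := by
    intro e he
    rw [hH2, edgeSet_deleteEdges]
    refine ⟨d.edges_subset_edgeSet he, ?_⟩
    simp only [Set.mem_singleton_iff]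
    rintro rfl
    exact he1d he
  have hd₂ : (d.transfer H₂ hd2sub).IsCycle := hd.transfer hd2sub
  obtain ⟨e₂, he₂⟩ : ∃ e, e ∈ d.edges := by
    have h3 := hd.three_le_length
    have : 0 < d.edges.length := by rw [length_edges]; omega
    exact List.exists_mem_of_length_pos this
  have he₂' : e₂ ∈ (d.transfer H₂ hd2sub).edges := by
    rw [edges_transfer]; exact he₂
  set H₃ := H₂.deleteEdges {e₂} with hH3
  have hconn₃ : ∀ x ∈ S, H₃.Reachable x r := fun x hx =>
    PF_del_reach hd₂ he₂' (hconn₂ x hx)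
  have hLB := PF_LB (H := H₃) hr hconn₃
  have he1H : e₁ ∈ H.edgeFinset := mem_edgeFinset.mpr (c.edges_subset_edgeSet he1c)
  have hm2 : H₂.edgeFinset = H.edgeFinset.erase e₁ := PF_edgeFinset_del H e₁
  have he2H : e₂ ∈ H₂.edgeFinset := mem_edgeFinset.mpr (hd2sub e₂ he₂)
  have hm3 : H₃.edgeFinset = H₂.edgeFinset.erase e₂ := PF_edgeFinset_del H₂ e₂
  have c2 : H₂.edgeFinset.card = H.edgeFinset.card - 1 := by
    rw [hm2, card_erase_of_mem he1H]
  have c3 : H₃.edgeFinset.card = H₂.edgeFinset.card - 1 := by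
    rw [hm3, card_erase_of_mem he2H]
  have hc1 : 1 ≤ H.edgeFinset.card := card_pos.mpr ⟨e₁, he1H⟩
  have hc2 : 1 ≤ H₂.edgeFinset.card := card_pos.mpr ⟨e₂, he2H⟩
  omega

end PFaux

section PFmain
variable {V : Type*} [Fintype V] [DecidableEq V]

lemma PF_empty_filter (G : SimpleGraph V) [DecidableRel G.Adj] :
    (G.edgeFinset.filter (fun e => ∀ x ∈ e, x ∈ (∅ : Finset V))) = ∅ := by
  apply Finset.filter_false_of_mem
  intro e he
  induction e with
  | _ a b =>
    intro hall
    exact absurd (hall a (Sym2.mem_mk_left a b)) (Finset.notMem_empty a)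

lemma PF_main (G : SimpleGraph V) [DecidableRel G.Adj] :
    ∀ (n : ℕ) (S : Finset V), S.card ≤ n →
    S.card < (G.edgeFinset.filter (fun e => ∀ x ∈ e, x ∈ S)).card →
    ∃ (u v : V) (c : G.Walk u u) (d : G.Walk v v),
      c.IsCycle ∧ d.IsCycle ∧ G.Reachable u v ∧ c.edges.toFinset ≠ d.edges.toFinset := by
  intro n
  induction n with
  | zero =>
    intro S hn hlt
    rw [Finset.card_eq_zero.mp (Nat.le_zero.mp hn), PF_empty_filter] at hlt
    simp at hlt
  | succ n ih =>
    intro S hn hlt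
    classical
    have hSne : S.Nonempty := by
      rcases S.eq_empty_or_nonempty with rfl | h
      · rw [PF_empty_filter] at hlt; simp at hlt
      · exact h
    obtain ⟨v, hv⟩ := hSne
    set G' := PFwithin G S with hG'
    set S1 := S.filter (fun x => G'.Reachable v x) with hS1
    set S2 := S \ S1 with hS2
    have hvS1 : v ∈ S1 := Finset.mem_filter.mpr ⟨hv, Reachable.refl v⟩
    -- edges within S split into edges within S1 and within S2
    have hsplit : G.edgeFinset.filter (fun e => ∀ x ∈ e, x ∈ S)
        = (G.edgeFinset.filter (fun e => ∀ x ∈ e, x ∈ S1))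
          ∪ (G.edgeFinset.filter (fun e => ∀ x ∈ e, x ∈ S2)) := by
      ext e
      induction e with
      | _ a b =>
        simp only [Finset.mem_union, Finset.mem_filter, Sym2.mem_iff, forall_eq_or_imp,
          forall_eq]
        constructor
        · rintro ⟨he, ha, hb⟩
          have hadj : G'.Adj a b := ⟨mem_edgeFinset.mp he, ha, hb⟩
          by_cases h1 : a ∈ S1
          · have hra : G'.Reachable v a := (Finset.mem_filter.mp h1).2
            have hrb : G'.Reachable v b := hra.trans hadj.reachable
            exact Or.inl ⟨he, h1, Finset.mem_filter.mpr ⟨hb, hrb⟩⟩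
          · have h2 : b ∉ S1 := by
              intro h2
              have hrb : G'.Reachable v b := (Finset.mem_filter.mp h2).2
              exact h1 (Finset.mem_filter.mpr ⟨ha, hrb.trans hadj.symm.reachable⟩)
            exact Or.inr ⟨he, Finset.mem_sdiff.mpr ⟨ha, h1⟩, Finset.mem_sdiff.mpr ⟨hb, h2⟩⟩
        · rintro (⟨he, ha, hb⟩ | ⟨he, ha, hb⟩)
          · exact ⟨he, Finset.mem_of_mem_filter a ha, Finset.mem_of_mem_filter b hb⟩
          · exact ⟨he, (Finset.mem_sdiff.mp ha).1, (Finset.mem_sdiff.mp hb).1⟩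
    have hdisj : Disjoint (G.edgeFinset.filter (fun e => ∀ x ∈ e, x ∈ S1))
        (G.edgeFinset.filter (fun e => ∀ x ∈ e, x ∈ S2)) := by
      rw [Finset.disjoint_left]
      intro e he1 he2
      induction e with
      | _ a b =>
        have ha1 : a ∈ S1 := (Finset.mem_filter.mp he1).2 a (Sym2.mem_mk_left a b)
        have ha2 : a ∈ S2 := (Finset.mem_filter.mp he2).2 a (Sym2.mem_mk_left a b)
        exact (Finset.mem_sdiff.mp ha2).2 ha1
    have hcard : (G.edgeFinset.filter (fun e => ∀ x ∈ e, x ∈ S)).card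
        = (G.edgeFinset.filter (fun e => ∀ x ∈ e, x ∈ S1)).card
          + (G.edgeFinset.filter (fun e => ∀ x ∈ e, x ∈ S2)).card := by
      rw [hsplit, Finset.card_union_of_disjoint hdisj]
    have hScard : S.card = S1.card + S2.card := by
      have hsub : S1 ⊆ S := Finset.filter_subset _ _
      have h1 : S2.card = S.card - S1.card := by rw [hS2, Finset.card_sdiff_of_subset hsub]
      have h2 := Finset.card_le_card hsub
      omega
    by_cases hS2e : S2 = ∅
    · -- everything in S is G'-reachable from v
      have hall : ∀ x ∈ S, G'.Reachable v x := by
        intro x hx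
        by_contra hrx
        have : x ∈ S2 := Finset.mem_sdiff.mpr ⟨hx, fun h => hrx (Finset.mem_filter.mp h).2⟩
        rw [hS2e] at this
        exact Finset.notMem_empty x this
      have hconn : ∀ x ∈ S, G'.Reachable x v := fun x hx => (hall x hx).symm
      have hedge' : ∀ ⦃x y⦄, G'.Adj x y → x ∈ S := fun x y h => h.2.1
      have hEcard : G'.edgeFinset.card
          = (G.edgeFinset.filter (fun e => ∀ x ∈ e, x ∈ S)).card := by
        rw [PFwithin_edgeFinset]
      -- G' is not acyclic
      have hnac : ¬G'.IsAcyclic := by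
        intro hac
        have := PF_UB hac hv hconn hedge'
        omega
      rw [SimpleGraph.IsAcyclic] at hnac
      push_neg at hnac
      obtain ⟨u, c', hc'⟩ := hnac
      obtain ⟨e₁, he₁⟩ : ∃ e, e ∈ c'.edges := by
        have h3 := hc'.three_le_length
        have : 0 < c'.edges.length := by rw [length_edges]; omega
        exact List.exists_mem_of_length_pos this
      set G'' := G'.deleteEdges {e₁} with hG''
      have hconn'' : ∀ x ∈ S, G''.Reachable x v := fun x hx =>
        PF_del_reach hc' he₁ (hconn x hx)
      have hedge'' : ∀ ⦃x y⦄, G''.Adj x y → x ∈ S := fun x y h =>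
        hedge' (deleteEdges_adj.mp h).1
      have he1G' : e₁ ∈ G'.edgeFinset := mem_edgeFinset.mpr (c'.edges_subset_edgeSet he₁)
      have hm''e : G''.edgeFinset = G'.edgeFinset.erase e₁ := PF_edgeFinset_del G' e₁
      have hm'' : G''.edgeFinset.card = G'.edgeFinset.card - 1 := by
        rw [hm''e, card_erase_of_mem he1G']
      have hc1 : 1 ≤ G'.edgeFinset.card := card_pos.mpr ⟨e₁, he1G'⟩
      have hnac'' : ¬G''.IsAcyclic := by
        intro hac
        have := PF_UB hac hv hconn'' hedge''
        omega
      rw [SimpleGraph.IsAcyclic] at hnac''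
      push_neg at hnac''
      obtain ⟨w, d', hd'⟩ := hnac''
      have hd'e : e₁ ∉ d'.edges := by
        intro h
        have := d'.edges_subset_edgeSet h
        rw [hG'', edgeSet_deleteEdges] at this
        exact this.2 rfl
      -- transfer to G
      have hcsub : ∀ e ∈ c'.edges, e ∈ G.edgeSet := fun e he =>
        edgeSet_mono (PFwithin_le G S) (c'.edges_subset_edgeSet he)
      have hdsub : ∀ e ∈ d'.edges, e ∈ G.edgeSet := fun e he =>
        edgeSet_mono ((deleteEdges_le _).trans (PFwithin_le G S)) (d'.edges_subset_edgeSet he)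
      refine ⟨u, w, c'.transfer G hcsub, d'.transfer G hdsub,
        hc'.transfer hcsub, hd'.transfer hdsub, ?_, ?_⟩
      · -- reachability
        have huS : u ∈ S := by
          cases c' with
          | nil => exact absurd rfl hc'.ne_nil
          | cons h q => exact h.2.1
        have hwS : w ∈ S := by
          cases d' with
          | nil => exact absurd rfl hd'.ne_nil
          | cons h q => exact hedge'' h
        exact ((hall u huS).symm.trans (hall w hwS)).mono (PFwithin_le G S)
      · intro heq
        rw [edges_transfer, edges_transfer] at heq
        apply hd'e
        rw [← List.mem_toFinset, ← heq, List.mem_toFinset]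
        exact he₁
    · -- S2 nonempty : recurse
      have hS2ne : S2.Nonempty := Finset.nonempty_of_ne_empty hS2e
      have hS1lt : S1.card < S.card := by
        obtain ⟨x, hx⟩ := hS2ne
        have hxS := Finset.mem_sdiff.mp hx
        exact Finset.card_lt_card (Finset.ssubset_iff_of_subset
          (Finset.filter_subset _ _) |>.mpr ⟨x, hxS.1, hxS.2⟩)
      have hS2lt : S2.card < S.card := by
        have hvn2 : v ∉ S2 := fun h => (Finset.mem_sdiff.mp h).2 hvS1
        exact Finset.card_lt_card (Finset.ssubset_iff_of_subset
          (Finset.sdiff_subset) |>.mpr ⟨v, hv, hvn2⟩)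
      rcases Nat.lt_or_ge S1.card (G.edgeFinset.filter (fun e => ∀ x ∈ e, x ∈ S1)).card
        with h1 | h1
      · exact ih S1 (by omega) h1
      · have h2 : S2.card < (G.edgeFinset.filter (fun e => ∀ x ∈ e, x ∈ S2)).card := by
          omega
        exact ih S2 (by omega) h2

end PFmain

theorem stmt_13 {V : Type*} [Fintype V] [DecidableEq V] (G : SimpleGraph V)
    [DecidableRel G.Adj] :
    (∀ (u v : V) (c : G.Walk u u) (d : G.Walk v v),
        c.IsCycle → d.IsCycle → G.Reachable u v → c.edges.toFinset = d.edges.toFinset) ↔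
    (∀ S : Finset V, (G.edgeFinset.filter (fun e => ∀ x ∈ e, x ∈ S)).card ≤ S.card) := by
  constructor
  · intro hL S
    by_contra h
    push_neg at h
    obtain ⟨u, v, c, d, hc, hd, hr, hne⟩ := PF_main G S.card S le_rfl h
    exact hne (hL u v c d hc hd hr)
  · intro hR u v c d hc hd hr
    by_contra hne
    classical
    set S := Finset.univ.filter (fun x => G.Reachable u x) with hS
    have hmemS : ∀ {x}, G.Reachable u x → x ∈ S := fun h =>
      Finset.mem_filter.mpr ⟨Finset.mem_univ _, h⟩
    set G₁ := PFwithin G S with hG₁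
    have hwalkin : ∀ (x : V), G.Reachable u x → ∀ (z : V) (p : G.Walk x z),
        ∀ e ∈ p.edges, e ∈ G₁.edgeSet := by
      intro x hx z p e he
      induction e with
      | _ a b =>
        have hadj := p.adj_of_mem_edges he
        have ha : G.Reachable u a :=
          hx.trans (p.takeUntil a (p.fst_mem_support_of_mem_edges he)).reachable
        have hb : G.Reachable u b :=
          hx.trans (p.takeUntil b (p.snd_mem_support_of_mem_edges he)).reachable
        exact (G₁.mem_edgeSet).mpr ⟨hadj, hmemS ha, hmemS hb⟩
    have csub : ∀ e ∈ c.edges, e ∈ G₁.edgeSet :=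
      fun e he => hwalkin u (Reachable.refl u) u c e he
    have dsub : ∀ e ∈ d.edges, e ∈ G₁.edgeSet :=
      fun e he => hwalkin v hr v d e he
    have hc₁ : (c.transfer G₁ csub).IsCycle := hc.transfer csub
    have hd₁ : (d.transfer G₁ dsub).IsCycle := hd.transfer dsub
    have huS : u ∈ S := hmemS (Reachable.refl u)
    have hconn : ∀ x ∈ S, G₁.Reachable x u := by
      intro x hx
      obtain ⟨p⟩ := (Finset.mem_filter.mp hx).2
      exact ((p.transfer G₁ (hwalkin u (Reachable.refl u) x p)).reachable).symm
    have hex : ∃ e₁, (e₁ ∈ c.edges ∧ e₁ ∉ d.edges) ∨ (e₁ ∈ d.edges ∧ e₁ ∉ c.edges) := by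
      by_contra hno
      push_neg at hno
      apply hne
      ext e
      simp only [List.mem_toFinset]
      have := hno e
      tauto
    obtain ⟨e₁, he₁⟩ := hex
    have hkey : S.card + 1 ≤ G₁.edgeFinset.card := by
      rcases he₁ with ⟨hin, hout⟩ | ⟨hin, hout⟩
      · exact PF_core_lb huS hconn hc₁ hd₁
          (by rw [edges_transfer]; exact hin) (by rw [edges_transfer]; exact hout)
      · exact PF_core_lb huS hconn hd₁ hc₁
          (by rw [edges_transfer]; exact hin) (by rw [edges_transfer]; exact hout)
    have hB : G₁.edgeFinset.card ≤ S.card := by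
      have h := hR S
      rwa [← PFwithin_edgeFinset] at h
    omega
end

section
/- Let f : 2^V → ℝ be a normalized monotone supermodular function on a finite set V, let ρ > 0, ε ∈ (0,1), and let c_f ≥ 1 satisfy Σ_{u∈S} (f(S) − f(S−u)) ≤ c_f · f(S) for all S ⊆ V. Suppose f(V) − f(V − u) ≥ c_f(1+ε)ρ for all u ∈ V, and X ⊆ V is such that f(S) ≤ ρ|S| for all nonempty S ⊆ V − X. Then Σ_{u∈X} (f(V) − f(V−u)) ≥ (1/(c_f(1 + 1/ε))) · Σ_{u∈V} (f(V) − f(V−u)). -/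
open Finset

theorem stmt_14 {V : Type*} [Fintype V] [DecidableEq V] [Nonempty V]
    (f : Finset V → ℝ)
    (hsup : ∀ A B : Finset V, f A + f B ≤ f (A ∩ B) + f (A ∪ B))
    (hnorm : f ∅ = 0)
    (hmono : ∀ A B : Finset V, A ⊆ B → f A ≤ f B)
    (cf : ℝ) (hcf : 1 ≤ cf)
    (hcf_bound : ∀ S : Finset V, ∑ u ∈ S, (f S - f (S.erase u)) ≤ cf * f S)
    (ρ ε : ℝ) (hρ : 0 < ρ) (hε : ε ∈ Set.Ioo (0 : ℝ) 1)
    (hmarg : ∀ u : V, cf * (1 + ε) * ρ ≤ f univ - f (univ.erase u))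
    (X : Finset V)
    (hX : ∀ S : Finset V, S ⊆ univ \ X → S.Nonempty → f S ≤ ρ * S.card) :
    (1 / (cf * (1 + 1 / ε))) * ∑ u : V, (f univ - f (univ.erase u)) ≤
      ∑ u ∈ X, (f univ - f (univ.erase u)) := by
  obtain ⟨hε0, hε1⟩ := hε
  have hcf0 : (0:ℝ) < cf := lt_of_lt_of_le one_pos hcf
  set m : V → ℝ := fun u => f univ - f (univ.erase u) with hm
  -- marginal monotonicity
  have key : ∀ (S : Finset V) (u : V), u ∉ S → f (insert u S) - f S ≤ m u := by
    intro S u hu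
    have h := hsup (insert u S) (univ.erase u)
    have h1 : insert u S ∩ univ.erase u = S := by
      ext x
      simp only [mem_inter, mem_insert, mem_erase, mem_univ, and_true]
      constructor
      · rintro ⟨hx | hx, hne⟩
        · exact absurd hx hne
        · exact hx
      · intro hx
        exact ⟨Or.inr hx, fun h => hu (h ▸ hx)⟩
    have h2 : insert u S ∪ univ.erase u = univ := by
      ext x
      simp only [mem_union, mem_insert, mem_erase, mem_univ, iff_true]
      by_cases hxu : x = u
      · exact Or.inl (Or.inl hxu)
      · exact Or.inr ⟨hxu, trivial⟩
    rw [h1, h2] at h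
    simp only [hm]
    linarith
  -- telescoping over any finset
  have tele : ∀ Y : Finset V, f univ ≤ f (univ \ Y) + ∑ u ∈ Y, m u := by
    intro Y
    induction Y using Finset.induction_on with
    | empty => simp
    | @insert a Y ha ih =>
      have hset : univ \ Y = insert a (univ \ insert a Y) := by
        ext x
        simp only [mem_sdiff, mem_univ, true_and, mem_insert, not_or]
        by_cases hxa : x = a
        · simp [hxa, ha]
        · simp [hxa]
      have hanotin : a ∉ univ \ insert a Y := by simp
      have := key (univ \ insert a Y) a hanotin
      rw [Finset.sum_insert ha]
      calc f univ ≤ f (univ \ Y) + ∑ u ∈ Y, m u := ih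
        _ ≤ f (univ \ insert a Y) + m a + ∑ u ∈ Y, m u := by
            rw [hset]; linarith
        _ = f (univ \ insert a Y) + (m a + ∑ u ∈ Y, m u) := by ring
  set T : Finset V := univ \ X with hT
  have hfT : f T ≤ ρ * T.card := by
    rcases T.eq_empty_or_nonempty with h | h
    · simp [h, hnorm]
    · exact hX T (by rw [hT]) h
  have hmnonneg : ∀ u : V, 0 ≤ m u := fun u => by
    simp only [hm]; linarith [hmono (univ.erase u) univ (erase_subset u univ)]
  have hXnonneg : 0 ≤ ∑ u ∈ X, m u := Finset.sum_nonneg fun u _ => hmnonneg u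
  -- Σ_V m ≤ cf f(V)
  have hsumV : ∑ u : V, m u ≤ cf * f univ := by
    have := hcf_bound univ
    simpa [hm] using this
  have htele : f univ ≤ f T + ∑ u ∈ X, m u := tele X
  -- lower bound on Σ_T m
  have hTlow : (T.card : ℝ) * (cf * (1 + ε) * ρ) ≤ ∑ u ∈ T, m u := by
    calc (T.card : ℝ) * (cf * (1 + ε) * ρ) = ∑ _u ∈ T, cf * (1 + ε) * ρ := by
          rw [Finset.sum_const, nsmul_eq_mul]
      _ ≤ ∑ u ∈ T, m u := Finset.sum_le_sum fun u _ => hmarg u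
  have hsplit : ∑ u : V, m u = ∑ u ∈ T, m u + ∑ u ∈ X, m u := by
    rw [hT, Finset.sum_sdiff (subset_univ X)]
  have hTsub : ∑ u ∈ T, m u ≤ ∑ u : V, m u := by
    rw [hsplit]; linarith
  -- derive ε ρ |T| ≤ Σ_X m
  have hchain : (T.card : ℝ) * (cf * (1 + ε) * ρ) ≤ cf * (ρ * T.card + ∑ u ∈ X, m u) := by
    calc (T.card : ℝ) * (cf * (1 + ε) * ρ) ≤ ∑ u ∈ T, m u := hTlow
      _ ≤ ∑ u : V, m u := hTsub
      _ ≤ cf * f univ := hsumV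
      _ ≤ cf * (f T + ∑ u ∈ X, m u) := by
          apply mul_le_mul_of_nonneg_left htele (le_of_lt hcf0)
      _ ≤ cf * (ρ * T.card + ∑ u ∈ X, m u) := by
          apply mul_le_mul_of_nonneg_left _ (le_of_lt hcf0)
          linarith
  have hερT : ε * ρ * T.card ≤ ∑ u ∈ X, m u := by
    have h := hchain
    nlinarith [hcf0]
  -- final
  have hfinal : ∑ u : V, m u ≤ cf * (1 + 1 / ε) * ∑ u ∈ X, m u := by
    have hρT : ρ * T.card ≤ (∑ u ∈ X, m u) / ε := by
      rw [le_div_iff₀ hε0]; nlinarith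
    calc ∑ u : V, m u ≤ cf * (ρ * T.card + ∑ u ∈ X, m u) := by
          calc ∑ u : V, m u ≤ cf * f univ := hsumV
            _ ≤ cf * (f T + ∑ u ∈ X, m u) := mul_le_mul_of_nonneg_left htele (le_of_lt hcf0)
            _ ≤ cf * (ρ * T.card + ∑ u ∈ X, m u) := by
                apply mul_le_mul_of_nonneg_left _ (le_of_lt hcf0); linarith
      _ ≤ cf * ((∑ u ∈ X, m u) / ε + ∑ u ∈ X, m u) :=
          mul_le_mul_of_nonneg_left (by linarith) (le_of_lt hcf0)
      _ = cf * (1 + 1 / ε) * ∑ u ∈ X, m u := by field_simp; ring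
  have hpos : 0 < cf * (1 + 1 / ε) := by positivity
  rw [div_mul_eq_mul_div, one_mul, div_le_iff₀ hpos]
  calc ∑ u : V, m u ≤ cf * (1 + 1 / ε) * ∑ u ∈ X, m u := hfinal
    _ = (∑ u ∈ X, m u) * (cf * (1 + 1 / ε)) := by ring
end

section
/- Let f : 2^V → ℝ₊ be a normalized nonnegative supermodular function, ρ' > 0, and suppose R ⊆ V satisfies: (i) (f(R ∪ S') − f(R))/|S'| ≤ ρ' for every nonempty S' ⊆ V − R, and (ii) X ⊆ R is such that f(S)/|S| ≤ ρ' for every nonempty S ⊆ R − X. Then f(S)/|S| ≤ ρ' for every nonempty S ⊆ V − X. -/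
open Finset

theorem stmt_16 {V : Type*} [Fintype V] [DecidableEq V] (f : Finset V → ℝ)
    (hsup : ∀ A B : Finset V, f A + f B ≤ f (A ∩ B) + f (A ∪ B))
    (hnorm : f ∅ = 0)
    (hnonneg : ∀ S : Finset V, 0 ≤ f S)
    (ρ' : ℝ) (hρ' : 0 < ρ')
    (R : Finset V)
    (hR : ∀ S' : Finset V, S' ⊆ univ \ R → S'.Nonempty →
      (f (R ∪ S') - f R) / S'.card ≤ ρ')
    (X : Finset V) (hXR : X ⊆ R)
    (hX : ∀ S : Finset V, S ⊆ R \ X → S.Nonempty → f S / S.card ≤ ρ') :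
    ∀ S : Finset V, S ⊆ univ \ X → S.Nonempty → f S / S.card ≤ ρ' := by
  intro S hS hSne
  have hcard : (0 : ℝ) < S.card := by exact_mod_cast card_pos.mpr hSne
  rw [div_le_iff₀ hcard]
  -- split S into S ∩ R and S \ R
  have h1 : f (S ∩ R) ≤ ρ' * (S ∩ R).card := by
    rcases (S ∩ R).eq_empty_or_nonempty with h | h
    · simp [h, hnorm]
    · have hsub : S ∩ R ⊆ R \ X := by
        intro x hx
        simp only [mem_inter] at hx
        refine mem_sdiff.mpr ⟨hx.2, ?_⟩
        intro hxX
        have := hS hx.1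
        simp only [mem_sdiff] at this
        exact this.2 hxX
      have := hX _ hsub h
      have hc : (0 : ℝ) < (S ∩ R).card := by exact_mod_cast card_pos.mpr h
      rw [div_le_iff₀ hc] at this
      linarith
  have h2 : f (S ∪ R) - f R ≤ ρ' * (S \ R).card := by
    rcases (S \ R).eq_empty_or_nonempty with h | h
    · have : S ∪ R = R := union_eq_right.mpr (sdiff_eq_empty_iff_subset.mp h)
      simp [this, h]
    · have hsub : S \ R ⊆ univ \ R := by
        intro x hx; simp only [mem_sdiff] at *; exact ⟨mem_univ x, hx.2⟩
      have := hR _ hsub h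
      have hc : (0 : ℝ) < (S \ R).card := by exact_mod_cast card_pos.mpr h
      rw [div_le_iff₀ hc] at this
      have heq : R ∪ (S \ R) = S ∪ R := by
        rw [union_sdiff_self_eq_union, union_comm]
      rw [heq] at this
      linarith
  have h3 := hsup S R
  have hcards : (S ∩ R).card + (S \ R).card = S.card := by
    rw [← card_inter_add_card_sdiff S R]
  have : ((S ∩ R).card : ℝ) + (S \ R).card = S.card := by exact_mod_cast hcards
  nlinarith [hnonneg (S ∩ R), hnonneg (S ∪ R)]
end

section
/- Let G = (V, E) be a finite graph, ρ ≥ 0, ε ∈ (0, 1/2), and suppose (x, z) is a feasible solution of the orientation LP: x_u + x_v + z_{e,u} + z_{e,v} ≥ 1 for every edge e = uv, ρ·x_u + Σ_{e ∈ δ(u)} z_{e,u} ≤ ρ for every vertex u, and z ≥ 0, 0 ≤ x ≤ 1. Let S := {u : x_u > ε}. Then the maximum subgraph density of G − S is at most ρ/(1 − 2ε). -/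
open Finset

/-- Total fractional in-degree of `u` under the assignment giving `z1 e` of edge `e`
to its first endpoint and `z2 e` to its second endpoint. -/
noncomputable def MultiGraph.lpInDeg {V : Type*} [DecidableEq V] (G : MultiGraph V)
    (z1 z2 : G.E → ℝ) (u : V) : ℝ :=
  ∑ e : G.E, ((if (G.ends e).1 = u then z1 e else 0) +
    (if (G.ends e).2 = u then z2 e else 0))

theorem stmt_18 {V : Type*} [Fintype V] [DecidableEq V] (G : MultiGraph V)
    (hloopless : ∀ e : G.E, (G.ends e).1 ≠ (G.ends e).2)
    (ρ : ℝ) (hρ : 0 ≤ ρ)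
    (ε : ℝ) (hε : ε ∈ Set.Ioo (0 : ℝ) (1 / 2))
    (x : V → ℝ) (z1 z2 : G.E → ℝ)
    (hx01 : ∀ u : V, 0 ≤ x u ∧ x u ≤ 1)
    (hz1 : ∀ e : G.E, 0 ≤ z1 e) (hz2 : ∀ e : G.E, 0 ≤ z2 e)
    (hedge : ∀ e : G.E, 1 ≤ x (G.ends e).1 + x (G.ends e).2 + z1 e + z2 e)
    (hvtx : ∀ u : V, ρ * x u + G.lpInDeg z1 z2 u ≤ ρ)
    (S : Finset V) (hS : S = univ.filter (fun u => ε < x u)) :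
    ∀ T : Finset V, T ⊆ univ \ S → T.Nonempty →
      (G.edgesIn T : ℝ) ≤ (ρ / (1 - 2 * ε)) * T.card := by
  obtain ⟨hε0, hε2⟩ := hε
  have hpos : 0 < 1 - 2 * ε := by linarith
  intro T hT _
  have hxT : ∀ u ∈ T, x u ≤ ε := by
    intro u hu
    have := hT hu
    rw [hS] at this
    simp only [Finset.mem_sdiff, Finset.mem_filter, Finset.mem_univ, true_and] at this
    linarith [not_lt.mp this]
  -- swap sums
  have hswap : ∑ u ∈ T, G.lpInDeg z1 z2 u
      = ∑ e : G.E, ((if (G.ends e).1 ∈ T then z1 e else 0) +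
          (if (G.ends e).2 ∈ T then z2 e else 0)) := by
    unfold MultiGraph.lpInDeg
    rw [Finset.sum_comm]
    refine Finset.sum_congr rfl fun e _ => ?_
    rw [Finset.sum_add_distrib]
    congr 1 <;> simp [Finset.sum_ite_eq T]
  have hupper : ∑ u ∈ T, G.lpInDeg z1 z2 u ≤ ρ * T.card := by
    calc ∑ u ∈ T, G.lpInDeg z1 z2 u ≤ ∑ _u ∈ T, ρ := by
          refine Finset.sum_le_sum fun u _ => ?_
          have := hvtx u
          have hx := (hx01 u).1
          nlinarith
      _ = ρ * T.card := by rw [Finset.sum_const, nsmul_eq_mul, mul_comm]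
  have hlower : (1 - 2 * ε) * (G.edgesIn T : ℝ) ≤ ∑ u ∈ T, G.lpInDeg z1 z2 u := by
    rw [hswap]
    unfold MultiGraph.edgesIn
    rw [← Finset.sum_filter_add_sum_filter_not Finset.univ
      (fun e : G.E => (G.ends e).1 ∈ T ∧ (G.ends e).2 ∈ T)]
    have h1 : (1 - 2 * ε) * ((Finset.univ.filter
        (fun e : G.E => (G.ends e).1 ∈ T ∧ (G.ends e).2 ∈ T)).card : ℝ)
        ≤ ∑ e ∈ Finset.univ.filter
            (fun e : G.E => (G.ends e).1 ∈ T ∧ (G.ends e).2 ∈ T),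
            ((if (G.ends e).1 ∈ T then z1 e else 0) +
              (if (G.ends e).2 ∈ T then z2 e else 0)) := by
      rw [mul_comm, ← nsmul_eq_mul, ← Finset.sum_const]
      refine Finset.sum_le_sum fun e he => ?_
      rw [Finset.mem_filter] at he
      rw [if_pos he.2.1, if_pos he.2.2]
      have := hedge e
      have h1 := hxT _ he.2.1
      have h2 := hxT _ he.2.2
      linarith
    have h2 : (0:ℝ) ≤ ∑ e ∈ Finset.univ.filter
        (fun e : G.E => ¬((G.ends e).1 ∈ T ∧ (G.ends e).2 ∈ T)),
        ((if (G.ends e).1 ∈ T then z1 e else 0) +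
          (if (G.ends e).2 ∈ T then z2 e else 0)) := by
      refine Finset.sum_nonneg fun e _ => ?_
      have := hz1 e; have := hz2 e
      positivity
    linarith
  rw [div_mul_eq_mul_div, le_div_iff₀ hpos]
  calc (G.edgesIn T : ℝ) * (1 - 2 * ε) = (1 - 2 * ε) * (G.edgesIn T : ℝ) := mul_comm _ _
    _ ≤ ρ * T.card := le_trans hlower hupper
end
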